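/- arXiv:0812.4896 — 3 statements merged into one kernel-verified Lean document; each statement's English description precedes it below -/
import Mathlib

section
/- For every decreasing function φ : ℝ₊ → ℝ₊ with φ(y) = o(y⁻¹) as y → ∞, there is an uncountable set of real numbers α satisfying: the inequality ‖q·α‖ < φ(q) has infinitely many solutions in positive integers q, but for every ε > 0 the inequality ‖q·α‖ < (1−ε)·φ(q) has only finitely many solutions in positive integers q. -/
noncomputable def distNearestInt (t : ℝ) : ℝ := |t - round t|

/-!
Following Jarník, `α` is the common point of nested windows attached to fractions `p_k / q_k`
with `q_k p_{k+1} - p_k q_{k+1} = ±1` and `α` on alternating sides of them, so that the errors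
`θ_k = |q_k α - p_k|` satisfy `θ_k q_{k+1} + q_k θ_{k+1} = 1`. Taking `q_{k+1}` in
`(1/φ(q_k), 1/φ(q_k) + 2 q_k]` pins `θ_k` between `(1 - 3 φ(q_k) q_k) φ(q_k)` and `φ(q_k)`.
Since `p_k / q_k` is a best approximation among denominators below `q_{k+1}` and `φ` decreases,
no `q ≥ q_k` achieves `(1 - ε) φ(q)` once `3 φ(q_k) q_k ≤ ε`. Each step admits two choices of
`q_{k+1}` (differing by `q_k`), and different branches of this binary tree give different `α`.
-/

open Set Filter Topology

/-- Best approximation property of adjacent fractions `p / q`, `p' / q'` enclosing `α`. -/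
theorem abs_mul_sub_le_abs_mul_sub_of_isUnit {p q p' q' a b : ℤ}
    (hdet : IsUnit (q * p' - p * q')) (hq : 0 ≤ q) (hb : 0 < b) (hbq : b < q') {α : ℝ}
    (hsign : (q * α - p) * (q' * α - p') ≤ 0) : |q * α - p| ≤ |b * α - a| := by
  set d := q * p' - p * q'
  have hd2 : d * d = 1 := Int.isUnit_mul_self hdet
  -- `(b, a) = x (q, p) + y (q', p')` with `x ≠ 0` and `x y ≤ 0`, so both error terms have one sign
  set x := d * (b * p' - a * q')
  set y := d * (a * q - b * p)
  have hbxy : b = x * q + y * q' := by linear_combination (-b) * hd2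
  have haxy : a = x * p + y * p' := by linear_combination (-a) * hd2
  have hx : x ≠ 0 := by
    intro hx0
    rw [hx0] at hbxy
    rcases le_or_gt y 0 with hy | hy <;> nlinarith
  have hxy : x * y ≤ 0 := by
    rcases lt_or_gt_of_ne hx with hx | hx <;> rcases le_or_gt y 0 with hy | hy <;> nlinarith
  have hreal : (b * α - a : ℝ) = x * (q * α - p) + y * (q' * α - p') := by
    rw [hbxy, haxy]; push_cast; ring
  have hx1 : (1 : ℝ) ≤ |(x : ℝ)| := by exact_mod_cast Int.one_le_abs hx
  have hxy' : (x * y : ℝ) ≤ 0 := by exact_mod_cast hxy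
  calc |q * α - p| ≤ |(x : ℝ)| * |q * α - p| := le_mul_of_one_le_left (abs_nonneg _) hx1
    _ = |x * (q * α - p)| := (abs_mul _ _).symm
    _ ≤ |b * α - a| := by
      rw [hreal, ← sq_le_sq]
      nlinarith [mul_nonneg_of_nonpos_of_nonpos hxy' hsign]

theorem exists_det_eq_of_isCoprime {p q : ℤ} (hpq : IsCoprime p q) (hq : 0 < q) (d : ℤ) (A : ℝ) :
    ∃ p' q' : ℤ, q * p' - p * q' = d ∧ (q' : ℝ) ∈ Ioc A (A + q) := by
  obtain ⟨u, v, huv⟩ := hpq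
  obtain ⟨m, hm, -⟩ := existsUnique_add_zsmul_mem_Ioc (by exact_mod_cast hq : (0 : ℝ) < q)
    ((-(d * u) : ℤ) : ℝ) A
  refine ⟨d * v + m * p, -(d * u) + m * q, by linear_combination d * huv, ?_⟩
  simpa using hm

namespace Jarnik

/-- A fraction `p / q` together with the side `sgn` of the target number on which it lies. -/
structure State where
  p : ℤ
  q : ℕ
  sgn : ℤˣ

namespace State

def err (t : State) (α : ℝ) : ℝ := ((t.sgn : ℤ) : ℝ) * (t.q * α - t.p)

theorem continuous_err (t : State) : Continuous t.err := by
  unfold err; fun_prop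

theorem abs_err (t : State) (α : ℝ) : |t.err α| = |t.q * α - t.p| := by
  rcases Int.units_eq_one_or t.sgn with h | h <;> simp [err, h, abs_sub_comm]

theorem mul_sub_eq (t : State) (α : ℝ) : t.q * α - t.p = ((t.sgn : ℤ) : ℝ) * t.err α := by
  rcases Int.units_eq_one_or t.sgn with h | h <;> simp [err, h]

end State

structure Admissible (φ : ℝ → ℝ) (N : ℕ) : Prop where
  pos : ∀ x > 0, 0 < φ x
  antitoneOn : AntitoneOn φ (Ioi 0)
  tendsto : Tendsto (fun y => φ y * y) atTop (𝓝 0)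
  mul_le : ∀ y : ℝ, N ≤ y → φ y * y ≤ 1 / 8
  one_le : 1 ≤ N

variable {φ : ℝ → ℝ} {N : ℕ}

namespace Admissible

variable (h : Admissible φ N) {q : ℕ} (hq : N ≤ q)
include h hq

theorem cast_pos : (0 : ℝ) < q := by
  have := h.one_le; exact_mod_cast (show 0 < q by omega)

theorem pos_of_le : 0 < φ q := h.pos _ (h.cast_pos hq)

theorem mul_le_of_le : φ q * q ≤ 1 / 8 := h.mul_le _ (by exact_mod_cast hq)

end Admissible

structure IsStep (φ : ℝ → ℝ) (t u : State) : Prop where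
  det : (t.q : ℤ) * u.p - t.p * u.q = t.sgn
  sgn : u.sgn = -t.sgn
  q_mem : (u.q : ℝ) ∈ Ioc (φ t.q)⁻¹ ((φ t.q)⁻¹ + 2 * t.q)

namespace IsStep

variable {t u : State} (hs : IsStep φ t u)
include hs

theorem err_mul_add (α : ℝ) : t.err α * u.q + t.q * u.err α = 1 := by
  have hdet : ((t.q : ℤ) : ℝ) * u.p - t.p * u.q = ((t.sgn : ℤ) : ℝ) := by exact_mod_cast hs.det
  have hsq : ((t.sgn : ℤ) : ℝ) * ((t.sgn : ℤ) : ℝ) = 1 := by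
    exact_mod_cast Int.units_coe_mul_self t.sgn
  simp only [State.err, hs.sgn, Units.val_neg, Int.cast_neg, Int.cast_natCast] at hdet ⊢
  linear_combination ((t.sgn : ℤ) : ℝ) * hdet + hsq

theorem isCoprime : IsCoprime u.p u.q :=
  ⟨t.sgn * t.q, -(t.sgn * t.p), by
    linear_combination (t.sgn : ℤ) * hs.det + Int.units_coe_mul_self t.sgn⟩

theorem inv_lt (hφ : 0 < φ t.q) : (u.q : ℝ)⁻¹ < φ t.q :=
  inv_lt_of_inv_lt₀ hφ hs.q_mem.1

variable (h : Admissible φ N) (ht : N ≤ t.q)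
include h ht

theorem le_inv : (1 - 2 * (φ t.q * t.q)) * φ t.q ≤ (u.q : ℝ)⁻¹ := by
  have hφ := h.pos_of_le ht
  have hu : (0 : ℝ) < u.q := lt_trans (by positivity) hs.q_mem.1
  have hφq : φ t.q * (φ t.q)⁻¹ = 1 := mul_inv_cancel₀ hφ.ne'
  rw [← one_div, le_div_iff₀ hu]
  calc (1 - 2 * (φ t.q * t.q)) * φ t.q * u.q
      ≤ (1 - 2 * (φ t.q * t.q)) * φ t.q * ((φ t.q)⁻¹ + 2 * t.q) := by
        gcongr
        · nlinarith [h.mul_le_of_le ht]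
        · exact hs.q_mem.2
    _ = 1 - (2 * (φ t.q * t.q)) ^ 2 := by linear_combination (1 - 2 * (φ t.q * t.q)) * hφq
    _ ≤ 1 := by nlinarith

theorem q_lt : t.q < u.q := by
  have hφ := h.pos_of_le ht
  have hc := h.mul_le_of_le ht
  have : (t.q : ℝ) < u.q := by
    refine lt_trans ?_ hs.q_mem.1
    rw [← one_div, lt_div_iff₀ hφ]
    linarith
  exact_mod_cast this

end IsStep

theorem exists_isStep_lt {t : State} (hφ : 0 < φ t.q) (hq : 0 < t.q) (hco : IsCoprime t.p t.q) :
    ∃ u w : State, IsStep φ t u ∧ IsStep φ t w ∧ u.q < w.q := by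
  obtain ⟨p', q', hdet, hlo, hhi⟩ :=
    exists_det_eq_of_isCoprime hco (by exact_mod_cast hq) t.sgn (φ t.q)⁻¹
  have hq' : (0 : ℝ) ≤ q' := (lt_trans (inv_pos.2 hφ) hlo).le
  lift q' to ℕ using (by exact_mod_cast hq')
  push_cast at hdet hlo hhi
  refine ⟨⟨p', q', -t.sgn⟩, ⟨p' + t.p, q' + t.q, -t.sgn⟩, ⟨hdet, rfl, hlo, ?_⟩,
    ⟨by push_cast; linear_combination hdet, rfl, ?_, ?_⟩, by simpa using hq⟩
  · linarith [(Nat.cast_nonneg t.q : (0 : ℝ) ≤ t.q)]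
  · push_cast; linarith [(Nat.cast_nonneg t.q : (0 : ℝ) ≤ t.q)]
  · push_cast; linarith

def IsBranching (φ : ℝ → ℝ) (f : State → Bool → State) : Prop :=
  ∀ t : State, 0 < t.q → IsCoprime t.p t.q →
    (∀ b, IsStep φ t (f t b)) ∧ (f t false).q < (f t true).q

theorem exists_isBranching (hpos : ∀ x > 0, 0 < φ x) : ∃ f, IsBranching φ f := by
  have key : ∀ t : State, ∃ u w : State, 0 < t.q → IsCoprime t.p t.q →
      IsStep φ t u ∧ IsStep φ t w ∧ u.q < w.q := by
    intro t
    by_cases ht : 0 < t.q ∧ IsCoprime t.p t.q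
    · obtain ⟨u, w, huw⟩ := exists_isStep_lt (hpos _ (by exact_mod_cast ht.1)) ht.1 ht.2
      exact ⟨u, w, fun _ _ => huw⟩
    · exact ⟨t, t, fun h₁ h₂ => absurd ⟨h₁, h₂⟩ ht⟩
  choose u w huw using key
  refine ⟨fun t b => cond b (w t) (u t), fun t hq hco => ?_⟩
  obtain ⟨hu, hw, hlt⟩ := huw t hq hco
  exact ⟨fun b => by cases b; exacts [hu, hw], hlt⟩

def orbit (f : State → Bool → State) (t₀ : State) (s : ℕ → Bool) : ℕ → State
  | 0 => t₀
  | k + 1 => f (orbit f t₀ s k) (s k)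

theorem exists_orbit_eq_and_ne {f : State → Bool → State} {t₀ : State} {s s' : ℕ → Bool}
    (hne : s ≠ s') : ∃ k, orbit f t₀ s k = orbit f t₀ s' k ∧ s k ≠ s' k := by
  classical
  have hex : ∃ k, s k ≠ s' k := Function.ne_iff.1 hne
  refine ⟨Nat.find hex, ?_, Nat.find_spec hex⟩
  have agree : ∀ k ≤ Nat.find hex, orbit f t₀ s k = orbit f t₀ s' k := by
    intro k hk
    induction k with
    | zero => rfl
    | succ k ih =>
      simp only [orbit]
      rw [ih (by omega), not_ne_iff.1 (Nat.find_min hex (by omega))]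
  exact agree _ le_rfl

structure IsChain (φ : ℝ → ℝ) (N : ℕ) (t : ℕ → State) : Prop where
  le_q : ∀ k, N ≤ (t k).q
  isStep : ∀ k, IsStep φ (t k) (t (k + 1))

section Orbit

variable (h : Admissible φ N) {f : State → Bool → State} (hf : IsBranching φ f) {t₀ : State}
  (h₀ : N ≤ t₀.q) (hco : IsCoprime t₀.p t₀.q)
include h hf h₀ hco

theorem le_q_and_isCoprime_orbit (s : ℕ → Bool) (k : ℕ) :
    N ≤ (orbit f t₀ s k).q ∧ IsCoprime (orbit f t₀ s k).p (orbit f t₀ s k).q := by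
  induction k with
  | zero => exact ⟨h₀, hco⟩
  | succ k ih =>
    have hs := (hf _ (h.one_le.trans ih.1) ih.2).1 (s k)
    exact ⟨ih.1.trans (hs.q_lt h ih.1).le, hs.isCoprime⟩

theorem isChain_orbit (s : ℕ → Bool) : IsChain φ N (orbit f t₀ s) where
  le_q k := (le_q_and_isCoprime_orbit h hf h₀ hco s k).1
  isStep k :=
    have hk := le_q_and_isCoprime_orbit h hf h₀ hco s k
    (hf _ (h.one_le.trans hk.1) hk.2).1 (s k)

end Orbit

def threshold (φ : ℝ → ℝ) (q : ℕ) : ℝ := (1 - 3 * (φ q * q)) * φ q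

theorem Admissible.threshold_pos (h : Admissible φ N) {q : ℕ} (hq : N ≤ q) :
    0 < threshold φ q :=
  mul_pos (by linarith [h.mul_le_of_le hq]) (h.pos_of_le hq)

def window (φ : ℝ → ℝ) (t : ℕ → State) (k : ℕ) : Set ℝ :=
  (t k).err ⁻¹' Icc (threshold φ (t k).q) ((t (k + 1)).q : ℝ)⁻¹

theorem isClosed_window {t : ℕ → State} {k : ℕ} : IsClosed (window φ t k) :=
  isClosed_Icc.preimage (t k).continuous_err

namespace IsChain

variable {t : ℕ → State} (h : Admissible φ N) (ht : IsChain φ N t)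
include h ht

theorem strictMono : StrictMono fun k => (t k).q :=
  strictMono_nat_of_lt_succ fun k => (ht.isStep k).q_lt h (ht.le_q k)

theorem window_succ_subset (k : ℕ) : window φ t (k + 1) ⊆ window φ t k := by
  rintro α ⟨hlo, hhi⟩
  have hs := ht.isStep k
  have hq₀ := h.cast_pos (ht.le_q k)
  have hq₁ := h.cast_pos (ht.le_q (k + 1))
  have hφ₀ := h.pos_of_le (ht.le_q k)
  have hc₀ := h.mul_le_of_le (ht.le_q k)
  have hθ₀ : 0 ≤ (t (k + 1)).err α := (h.threshold_pos (ht.le_q (k + 1))).le.trans hlo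
  have hθ : (t (k + 1)).err α ≤ φ (t k).q :=
    calc (t (k + 1)).err α ≤ ((t (k + 2)).q : ℝ)⁻¹ := hhi
      _ ≤ φ (t (k + 1)).q := ((ht.isStep (k + 1)).inv_lt (h.pos_of_le (ht.le_q (k + 1)))).le
      _ ≤ φ (t k).q :=
        h.antitoneOn hq₀ hq₁ (by exact_mod_cast (ht.strictMono h).monotone k.le_succ)
  have hid := hs.err_mul_add α
  have hinv := hs.le_inv h (ht.le_q k)
  have hq₁inv : ((t (k + 1)).q : ℝ) * ((t (k + 1)).q : ℝ)⁻¹ = 1 := mul_inv_cancel₀ hq₁.ne'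
  constructor
  · calc threshold φ (t k).q
        ≤ (1 - φ (t k).q * (t k).q) * ((1 - 2 * (φ (t k).q * (t k).q)) * φ (t k).q) := by
          unfold threshold
          nlinarith [mul_nonneg (mul_self_nonneg (φ (t k).q * (t k).q)) hφ₀.le]
      _ ≤ (1 - φ (t k).q * (t k).q) * ((t (k + 1)).q : ℝ)⁻¹ := by gcongr; linarith
      _ ≤ (1 - (t k).q * (t (k + 1)).err α) * ((t (k + 1)).q : ℝ)⁻¹ :=
          mul_le_mul_of_nonneg_right (by nlinarith) (inv_nonneg.2 hq₁.le)
      _ = (t k).err α := by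
          linear_combination (-((t (k + 1)).q : ℝ)⁻¹) * hid + (t k).err α * hq₁inv
  · rw [← one_div, le_div_iff₀ hq₁]
    nlinarith

theorem div_mem_window (k : ℕ) : ((t (k + 1)).p / (t (k + 1)).q : ℝ) ∈ window φ t k := by
  have hq₁ := h.cast_pos (ht.le_q (k + 1))
  have hzero : (t (k + 1)).err ((t (k + 1)).p / (t (k + 1)).q) = 0 := by
    simp [State.err, mul_div_cancel₀ _ hq₁.ne']
  have hid := (ht.isStep k).err_mul_add ((t (k + 1)).p / (t (k + 1)).q)
  rw [hzero, mul_zero, add_zero] at hid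
  have herr : (t k).err ((t (k + 1)).p / (t (k + 1)).q) = ((t (k + 1)).q : ℝ)⁻¹ :=
    eq_inv_of_mul_eq_one_left hid
  refine ⟨?_, herr.le⟩
  rw [herr]
  refine le_trans ?_ ((ht.isStep k).le_inv h (ht.le_q k))
  unfold threshold
  have hφ₀ := h.pos_of_le (ht.le_q k)
  nlinarith [mul_pos (mul_pos hφ₀ (h.cast_pos (ht.le_q k))) hφ₀]

theorem isCompact_window_zero : IsCompact (window φ t 0) := by
  refine (isCompact_Icc (a := -(|((t 0).p : ℝ)| + 1)) (b := |((t 0).p : ℝ)| + 1)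
    ).of_isClosed_subset isClosed_window fun α hα => ?_
  have hq₀ : (1 : ℝ) ≤ (t 0).q := by exact_mod_cast h.one_le.trans (ht.le_q 0)
  have hq₁ : (1 : ℝ) ≤ (t 1).q := by exact_mod_cast h.one_le.trans (ht.le_q 1)
  have herr : |((t 0).q : ℝ) * α - (t 0).p| ≤ 1 := by
    rw [← State.abs_err, abs_le]
    exact ⟨by linarith [h.threshold_pos (ht.le_q 0), hα.1], hα.2.trans (inv_le_one_of_one_le₀ hq₁)⟩
  rw [mem_Icc, ← abs_le]
  calc |α| ≤ (t 0).q * |α| := le_mul_of_one_le_left (abs_nonneg _) hq₀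
    _ = |((t 0).q * α - (t 0).p) + (t 0).p| := by rw [sub_add_cancel, abs_mul, Nat.abs_cast]
    _ ≤ |((t 0).p : ℝ)| + 1 := by linarith [abs_add_le (((t 0).q : ℝ) * α - (t 0).p) (t 0).p]

theorem exists_forall_mem_window : ∃ α, ∀ k, α ∈ window φ t k := by
  obtain ⟨α, hα⟩ :=
    (ht.isCompact_window_zero h).nonempty_iInter_of_sequence_nonempty_isCompact_isClosed _
      (ht.window_succ_subset h) (fun k => ⟨_, ht.div_mem_window h k⟩) fun _ => isClosed_window
  exact ⟨α, mem_iInter.1 hα⟩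

theorem abs_mul_sub_eq_err {k : ℕ} {α : ℝ} (hα : α ∈ window φ t k) :
    |((t k).q : ℝ) * α - (t k).p| = (t k).err α := by
  rw [← State.abs_err, abs_of_nonneg ((h.threshold_pos (ht.le_q k)).le.trans hα.1)]

theorem distNearestInt_lt {k : ℕ} {α : ℝ} (hα : α ∈ window φ t k) :
    distNearestInt ((t k).q * α) < φ (t k).q :=
  calc distNearestInt ((t k).q * α) ≤ |((t k).q : ℝ) * α - (t k).p| := round_le _ _
    _ = (t k).err α := ht.abs_mul_sub_eq_err h hα
    _ ≤ ((t (k + 1)).q : ℝ)⁻¹ := hα.2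
    _ < φ (t k).q := (ht.isStep k).inv_lt (h.pos_of_le (ht.le_q k))

theorem threshold_le_distNearestInt {k : ℕ} {α : ℝ} (hα : α ∈ window φ t k)
    (hα₁ : α ∈ window φ t (k + 1)) {b : ℕ} (hb : 0 < b) (hbq : b < (t (k + 1)).q) :
    threshold φ (t k).q ≤ distNearestInt (b * α) := by
  have hs := ht.isStep k
  have hsign :
      (((t k).q : ℝ) * α - (t k).p) * (((t (k + 1)).q : ℝ) * α - (t (k + 1)).p) ≤ 0 := by
    have hsq : ((t k).sgn : ℤ) * ((t k).sgn : ℤ) = (1 : ℝ) := by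
      exact_mod_cast Int.units_coe_mul_self _
    rw [State.mul_sub_eq, State.mul_sub_eq, hs.sgn, Units.val_neg, Int.cast_neg]
    nlinarith [mul_nonneg ((h.threshold_pos (ht.le_q k)).le.trans hα.1)
      ((h.threshold_pos (ht.le_q (k + 1))).le.trans hα₁.1)]
  have hbest := abs_mul_sub_le_abs_mul_sub_of_isUnit (a := round (b * α)) (b := b)
    (by rw [hs.det]; exact Units.isUnit _) (Nat.cast_nonneg _) (by exact_mod_cast hb)
    (by exact_mod_cast hbq) (by push_cast; exact hsign)
  push_cast at hbest
  calc threshold φ (t k).q ≤ (t k).err α := hα.1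
    _ = |((t k).q : ℝ) * α - (t k).p| := (ht.abs_mul_sub_eq_err h hα).symm
    _ ≤ distNearestInt (b * α) := hbest

theorem infinite_setOf {α : ℝ} (hα : ∀ k, α ∈ window φ t k) :
    {q : ℕ | 0 < q ∧ distNearestInt (q * α) < φ q}.Infinite :=
  infinite_of_injective_forall_mem (ht.strictMono h).injective fun k =>
    ⟨by exact_mod_cast h.cast_pos (ht.le_q k), ht.distNearestInt_lt h (hα k)⟩

theorem finite_setOf {α : ℝ} (hα : ∀ k, α ∈ window φ t k) {ε : ℝ} (hε : 0 < ε) :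
    {q : ℕ | 0 < q ∧ distNearestInt (q * α) < (1 - ε) * φ q}.Finite := by
  have hmono := ht.strictMono h
  have hlim : Tendsto (fun k => φ (t k).q * (t k).q) atTop (𝓝 0) :=
    h.tendsto.comp (tendsto_natCast_atTop_atTop.comp hmono.tendsto_atTop)
  obtain ⟨K, hK⟩ := eventually_atTop.1 (hlim.eventually (gt_mem_nhds (by positivity : 0 < ε / 3)))
  refine (finite_Iio (t K).q).subset fun b ⟨hb, hbα⟩ => ?_
  by_contra! hKb
  have hshift : StrictMono fun n => (t (K + n)).q := hmono.comp fun _ _ hmn => by omega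
  obtain ⟨n, hn, hn₁⟩ := hshift.exists_between_of_tendsto_atTop hshift.tendsto_atTop
    (x := b + 1) (by simpa [Nat.lt_succ_iff] using hKb)
  have hqk : (t (K + n)).q ≤ b := Nat.lt_succ_iff.1 hn
  have hbq : b < (t (K + n + 1)).q := by rw [add_assoc]; omega
  have hlow := ht.threshold_le_distNearestInt h (hα (K + n)) (hα (K + n + 1)) hb hbq
  have hq := h.cast_pos (ht.le_q (K + n))
  have hφb : φ b ≤ φ (t (K + n)).q :=
    h.antitoneOn hq (hq.trans_le (by exact_mod_cast hqk)) (by exact_mod_cast hqk)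
  have hc := hK (K + n) (by omega)
  have hc₁ := h.mul_le_of_le (ht.le_q (K + n))
  have hφbpos : 0 < φ b := h.pos _ (by exact_mod_cast hb)
  unfold threshold at hlow
  nlinarith [h.pos_of_le (ht.le_q (K + n))]

theorem notMem_window_succ {t' : ℕ → State} (ht' : IsChain φ N t') {k : ℕ} (hk : t k = t' k)
    (hlt : (t (k + 1)).q < (t' (k + 1)).q) {α : ℝ} (hα : α ∈ window φ t' k)
    (hα₁ : α ∈ window φ t' (k + 1)) : α ∉ window φ t (k + 1) := by
  -- `‖U α‖ < φ(U) ≤ 1 / (8 U) < φ(q_k) / 8` would beat the best-approximation bound along `t'`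
  intro hmem
  set U := (t (k + 1)).q
  have hU := h.cast_pos (ht.le_q (k + 1))
  have hlow := ht'.threshold_le_distNearestInt h hα hα₁ (by exact_mod_cast hU) hlt
  have hupp := ht.distNearestInt_lt h hmem
  rw [← hk] at hlow
  have hinv := (ht.isStep k).inv_lt (h.pos_of_le (ht.le_q k))
  have hUφ : 1 < (U : ℝ) * φ (t k).q := by rwa [inv_lt_iff_one_lt_mul₀' hU] at hinv
  have hcU := h.mul_le_of_le (ht.le_q (k + 1))
  have hc := h.mul_le_of_le (ht.le_q k)
  unfold threshold at hlow
  nlinarith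

end IsChain

theorem eq_of_forall_mem_window_orbit (h : Admissible φ N) {f : State → Bool → State}
    (hf : IsBranching φ f) {t₀ : State} (h₀ : N ≤ t₀.q) (hco : IsCoprime t₀.p t₀.q)
    {s s' : ℕ → Bool} {α : ℝ} (hα : ∀ k, α ∈ window φ (orbit f t₀ s) k)
    (hα' : ∀ k, α ∈ window φ (orbit f t₀ s') k) : s = s' := by
  by_contra hne
  obtain ⟨k, hk, hsk⟩ := exists_orbit_eq_and_ne (f := f) (t₀ := t₀) hne
  have hc := isChain_orbit h hf h₀ hco s
  have hc' := isChain_orbit h hf h₀ hco s'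
  obtain ⟨hN, hcop⟩ := le_q_and_isCoprime_orbit h hf h₀ hco s k
  have hlt := (hf _ (h.one_le.trans hN) hcop).2
  have hsucc : orbit f t₀ s (k + 1) = f (orbit f t₀ s k) (s k) := rfl
  have hsucc' : orbit f t₀ s' (k + 1) = f (orbit f t₀ s k) (s' k) := by rw [hk]; rfl
  cases hb : s k <;> cases hb' : s' k <;> rw [hb, hb'] at hsk <;> rw [hb] at hsucc <;>
    rw [hb'] at hsucc'
  · exact hsk rfl
  · exact hc.notMem_window_succ h hc' hk (by rw [hsucc, hsucc']; exact hlt) (hα' k) (hα' (k + 1))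
      (hα (k + 1))
  · exact hc'.notMem_window_succ h hc hk.symm (by rw [hsucc, hsucc']; exact hlt) (hα k)
      (hα (k + 1)) (hα' (k + 1))
  · exact hsk rfl

theorem exists_admissible (hpos : ∀ x > (0 : ℝ), 0 < φ x)
    (hdec : ∀ x y : ℝ, 0 < x → x < y → φ y < φ x) (ho : φ =o[atTop] fun y : ℝ => y⁻¹) :
    ∃ N, Admissible φ N := by
  have hlim : Tendsto (fun y => φ y * y) atTop (𝓝 0) := by
    simpa only [div_inv_eq_mul] using ho.tendsto_div_nhds_zero
  obtain ⟨M, hM⟩ :=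
    eventually_atTop.1 (hlim.eventually (Iic_mem_nhds (by norm_num : (0 : ℝ) < 1 / 8)))
  refine ⟨max 1 ⌈M⌉₊, hpos, StrictAntiOn.antitoneOn fun x hx y _ hxy => hdec x y hx hxy, hlim,
    fun y hy => hM y ?_, le_max_left _ _⟩
  calc M ≤ ⌈M⌉₊ := Nat.le_ceil M
    _ ≤ (max 1 ⌈M⌉₊ : ℕ) := by exact_mod_cast le_max_right _ _
    _ ≤ y := hy

theorem not_countable_nat_to_bool : ¬ Countable (ℕ → Bool) := by
  rw [not_countable_iff, ← Cardinal.aleph0_lt_mk_iff]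
  simpa using Cardinal.aleph0_lt_continuum

end Jarnik

/-- (Jarnik) For every decreasing function `φ : ℝ₊ → ℝ₊` with `φ(y) = o(y⁻¹)` as `y → ∞`,
there is an uncountable set of real numbers `α` such that the inequality `‖q·α‖ < φ(q)` has
infinitely many solutions in positive integers `q`, but for every `ε > 0` the inequality
`‖q·α‖ < (1 − ε)·φ(q)` has only finitely many solutions in positive integers `q`. -/
theorem jarnik_one_dimensional
    (φ : ℝ → ℝ)
    (hφpos : ∀ x > (0:ℝ), 0 < φ x)
    (hφdec : ∀ x y : ℝ, 0 < x → x < y → φ y < φ x)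
    (hφo : φ =o[Filter.atTop] fun y : ℝ => y⁻¹) :
    ∃ S : Set ℝ,
      ¬ S.Countable ∧
      ∀ α ∈ S,
        {q : ℕ | 0 < q ∧ distNearestInt (q * α) < φ q}.Infinite ∧
        ∀ ε > (0:ℝ),
          {q : ℕ | 0 < q ∧ distNearestInt (q * α) < (1 - ε) * φ q}.Finite := by
  obtain ⟨N, h⟩ := Jarnik.exists_admissible hφpos hφdec hφo
  obtain ⟨f, hf⟩ := Jarnik.exists_isBranching h.pos
  let t₀ : Jarnik.State := ⟨1, N, 1⟩
  have hchain := Jarnik.isChain_orbit h hf (t₀ := t₀) le_rfl isCoprime_one_left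
  choose α hα using fun s => (hchain s).exists_forall_mem_window h
  have hinj : Function.Injective α := fun s s' hss' =>
    Jarnik.eq_of_forall_mem_window_orbit h hf le_rfl isCoprime_one_left (hα s) (hss' ▸ hα s')
  refine ⟨range α, fun hcount => Jarnik.not_countable_nat_to_bool ?_, ?_⟩
  · exact countable_univ_iff.1 (by simpa using hcount.preimage hinj)
  · rintro _ ⟨s, rfl⟩
    exact ⟨(hchain s).infinite_setOf h (hα s), fun ε hε => (hchain s).finite_setOf h (hα s) hε⟩
end

section
/- Let a, b, c ∈ ℤ² with a ≠ 0 and with b and c linearly independent. Let α ∈ ℝ² satisfy ⟨b, α⟩ ∈ ℤ and ⟨c, α⟩ ∈ ℤ. Then for every λ ∈ ℤ the Euclidean distance from α to the line {x ∈ ℝ² : ⟨a, x⟩ = λ} is an integer multiple of 1/(|a|·|det(b, c)|). -/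
/-- The integer vector `m ∈ ℤ²` viewed as a point of the Euclidean plane. -/
noncomputable def vec (m : Fin 2 → ℤ) : EuclideanSpace ℝ (Fin 2) :=
  (WithLp.equiv 2 (Fin 2 → ℝ)).symm (fun i => (m i : ℝ))

/-- The determinant of the 2×2 matrix formed by `b, c ∈ ℤ²`. -/
def det2 (b c : Fin 2 → ℤ) : ℤ := b 0 * c 1 - b 1 * c 0

/-!
The distance from `α` to the line `⟪a, x⟫ = λ` is `|⟪a, α⟫ - λ| / ‖a‖`. In the plane every vector
is a combination of `b` and `c` with coefficients in `det(b, c)⁻¹ ℤ`, namely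
`det(b, c) a = det(a, c) b + det(b, a) c`, so `det(b, c) ⟪a, α⟫` is an integer and the distance is
an integer over `‖a‖ |det(b, c)|`.
-/

open Metric
open scoped RealInnerProductSpace

theorem infDist_setOf_inner_eq {E : Type*} [NormedAddCommGroup E] [InnerProductSpace ℝ E]
    (v α : E) (r : ℝ) : infDist α {x | ⟪v, x⟫ = r} = |⟪v, α⟫ - r| / ‖v‖ := by
  -- For `v = 0` the set is `∅` or `univ` and `/ ‖v‖` divides by zero, so both sides vanish.
  rcases eq_or_ne v 0 with rfl | hv
  · by_cases hr : r = 0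
    · simp [hr, infDist_zero_of_mem (Set.mem_univ α)]
    · simp [hr, eq_comm]
  have hv2 : ‖v‖ ^ 2 ≠ 0 := by positivity
  set t := (⟪v, α⟫ - r) / ‖v‖ ^ 2
  have hfoot : α - t • v ∈ {x | ⟪v, x⟫ = r} := by
    simp only [Set.mem_ofPred_eq, inner_sub_right, inner_smul_right, real_inner_self_eq_norm_sq, t]
    field_simp
    ring
  refine le_antisymm ?_ ((le_infDist ⟨_, hfoot⟩).2 fun y hy => ?_)
  · calc infDist α {x | ⟪v, x⟫ = r} ≤ dist α (α - t • v) := infDist_le_dist_of_mem hfoot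
      _ = |⟪v, α⟫ - r| / ‖v‖ := by
        rw [dist_eq_norm, sub_sub_cancel, norm_smul, Real.norm_eq_abs, abs_div, abs_of_pos
          (by positivity : 0 < ‖v‖ ^ 2)]
        field_simp
  · rw [dist_eq_norm, div_le_iff₀ (norm_pos_iff.2 hv), ← hy, ← inner_sub_right, mul_comm]
    exact abs_real_inner_le_norm v (α - y)

theorem inner_vec (m : Fin 2 → ℤ) (x : EuclideanSpace ℝ (Fin 2)) :
    ⟪vec m, x⟫ = m 0 * x 0 + m 1 * x 1 := by
  simp [vec, PiLp.inner_apply, Fin.sum_univ_two, mul_comm]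

theorem det2_mul_inner_vec (a b c : Fin 2 → ℤ) (x : EuclideanSpace ℝ (Fin 2)) :
    det2 b c * ⟪vec a, x⟫ = det2 a c * ⟪vec b, x⟫ + det2 b a * ⟪vec c, x⟫ := by
  simp only [inner_vec, det2]
  push_cast
  ring

theorem distance_divisibility_general
    (a b c : Fin 2 → ℤ) (hbc : det2 b c ≠ 0)
    (α : EuclideanSpace ℝ (Fin 2))
    (hb : ∃ n : ℤ, (inner ℝ (vec b) α : ℝ) = n)
    (hc : ∃ n : ℤ, (inner ℝ (vec c) α : ℝ) = n) :
    ∀ lam : ℤ, ∃ k : ℤ,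
      Metric.infDist α {x : EuclideanSpace ℝ (Fin 2) | (inner ℝ (vec a) x : ℝ) = lam} =
        k * (‖vec a‖ * |(det2 b c : ℝ)|)⁻¹ := by
  intro lam
  obtain ⟨nb, hnb⟩ := hb
  obtain ⟨nc, hnc⟩ := hc
  set k := det2 a c * nb + det2 b a * nc - det2 b c * lam
  have hk : (det2 b c : ℝ) * (⟪vec a, α⟫ - lam) = k := by
    push_cast [k]
    rw [← hnb, ← hnc, ← det2_mul_inner_vec]
    ring
  have hD : (det2 b c : ℝ) ≠ 0 := by exact_mod_cast hbc
  refine ⟨|k|, ?_⟩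
  rw [infDist_setOf_inner_eq, Int.cast_abs, ← hk, abs_mul]
  field_simp

/-- Let `a, b, c ∈ ℤ²` with `a ≠ 0` and `b, c` linearly independent, and let `α ∈ ℝ²`
satisfy `⟨b, α⟩ ∈ ℤ` and `⟨c, α⟩ ∈ ℤ`. Then for every `λ ∈ ℤ` the Euclidean distance from
`α` to the line `{x : ⟨a, x⟩ = λ}` is an integer multiple of `1/(|a|·|det(b, c)|)`. -/
theorem distance_divisibility
    (a b c : Fin 2 → ℤ) (ha : a ≠ 0) (hbc : det2 b c ≠ 0)
    (α : EuclideanSpace ℝ (Fin 2))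
    (hb : ∃ n : ℤ, (inner ℝ (vec b) α : ℝ) = n)
    (hc : ∃ n : ℤ, (inner ℝ (vec c) α : ℝ) = n) :
    ∀ lam : ℤ, ∃ k : ℤ,
      Metric.infDist α {x : EuclideanSpace ℝ (Fin 2) | (inner ℝ (vec a) x : ℝ) = lam} =
        k * (‖vec a‖ * |(det2 b c : ℝ)|)⁻¹ :=
  distance_divisibility_general a b c hbc α hb hc
end

section
/- Let m ∈ ℤ² be a primitive integer point (its coordinates are coprime). Define 𝔖 as the intersection, over all m' ∈ ℤ² \ {0, ±m} with |m'| ≤ |m|, of the sets {x ∈ ℝ² : ‖⟨m, x⟩‖ ≤ ‖⟨m', x⟩‖}. Then the set of all α ∈ ℝ² such that m is a best approximation for the linear form ⟨α, ·⟩ is contained in 𝔖 and contains the interior of 𝔖. -/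
/-- `m ∈ ℤ² \ {0}` is a best approximation for the linear form `⟨α, ·⟩` if
`‖⟨α, m⟩‖ < ‖⟨α, m'⟩‖` for every `m' ∈ ℤ² \ {0}` with `|m'| < |m|`, and
`‖⟨α, m⟩‖ ≤ ‖⟨α, m'⟩‖` for every `m' ∈ ℤ² \ {±m}` with `|m'| = |m|`. -/
def IsBestApprox (α : EuclideanSpace ℝ (Fin 2)) (m : Fin 2 → ℤ) : Prop :=
  m ≠ 0 ∧
  (∀ m' : Fin 2 → ℤ, m' ≠ 0 → ‖vec m'‖ < ‖vec m‖ →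
    distNearestInt (inner ℝ α (vec m)) < distNearestInt (inner ℝ α (vec m'))) ∧
  (∀ m' : Fin 2 → ℤ, m' ≠ m → m' ≠ -m → ‖vec m'‖ = ‖vec m‖ →
    distNearestInt (inner ℝ α (vec m)) ≤ distNearestInt (inner ℝ α (vec m')))

/-!
If `|m'| < |m|` and `m` is primitive, then `m'` is not a multiple of `m`, so
`x ↦ (⟨m, x⟩, ⟨m', x⟩)` is a surjective linear map onto `ℝ²` and hence open. It therefore carries
the interior of `{x | ‖⟨m, x⟩‖ ≤ ‖⟨m', x⟩‖}` into the interior of `{(a, b) | ‖a‖ ≤ ‖b‖}`, where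
the inequality is strict: at a point with `‖a‖ = ‖b‖`, either `b ∉ ℤ` and moving `b` towards its
nearest integer makes `‖b‖` smaller, or `a, b ∈ ℤ` and moving `a` off `ℤ` makes `‖a‖` positive.
-/

open Filter Topology

lemma distNearestInt_nonneg (t : ℝ) : 0 ≤ distNearestInt t := abs_nonneg _

lemma frequently_distNearestInt_pos (a : ℝ) : ∃ᶠ y in 𝓝 a, 0 < distNearestInt y := by
  have hdense : Dense (Set.range ((↑) : ℤ → ℝ))ᶜ := (Set.countable_range _).dense_compl ℝ
  refine (mem_closure_iff_frequently.mp (hdense a)).mono fun y hy => ?_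
  refine (distNearestInt_nonneg y).lt_of_ne fun h => hy ⟨round y, ?_⟩
  have := abs_eq_zero.mp h.symm
  linarith

lemma frequently_distNearestInt_lt {b : ℝ} (hb : distNearestInt b ≠ 0) :
    ∃ᶠ y in 𝓝 b, distNearestInt y < distNearestInt b := by
  set c := b - round b
  have hc : 0 < |c| := (distNearestInt_nonneg b).lt_of_ne' hb
  have hlim : Tendsto (fun τ : ℝ => b - τ * c) (𝓝[>] 0) (𝓝 b) :=
    tendsto_nhdsWithin_of_tendsto_nhds <|
      (by fun_prop : Continuous fun τ : ℝ => b - τ * c).tendsto' 0 b (by simp)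
  refine hlim.frequently (Eventually.frequently ?_)
  filter_upwards [Ioo_mem_nhdsGT (zero_lt_one' ℝ)] with τ ⟨hτ0, hτ1⟩
  calc distNearestInt (b - τ * c) ≤ |b - τ * c - round b| := round_le _ _
    _ = (1 - τ) * |c| := by
        rw [show b - τ * c - round b = (1 - τ) * c by ring, abs_mul, abs_of_pos (by linarith)]
    _ < |c| := by nlinarith

lemma distNearestInt_lt_of_eventually_le {a b : ℝ}
    (h : ∀ᶠ p : ℝ × ℝ in 𝓝 (a, b), distNearestInt p.1 ≤ distNearestInt p.2) :
    distNearestInt a < distNearestInt b := by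
  refine h.self_of_nhds.lt_of_ne fun hab => ?_
  by_cases hb : distNearestInt b = 0
  · have hleft : ∀ᶠ y in 𝓝 a, distNearestInt y ≤ distNearestInt b :=
      (Continuous.prodMk_left b).tendsto a |>.eventually h
    exact ((frequently_distNearestInt_pos a).and_eventually hleft).exists.elim
      fun y hy => by linarith [hy.1, hy.2]
  · have hright : ∀ᶠ y in 𝓝 b, distNearestInt a ≤ distNearestInt y :=
      (Continuous.prodMk_right a).tendsto b |>.eventually h
    exact ((frequently_distNearestInt_lt hb).and_eventually hright).exists.elim
      fun y hy => by linarith [hy.1, hy.2]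

lemma interior_setOf_distNearestInt_le_subset {E : Type*} [NormedAddCommGroup E]
    [NormedSpace ℝ E] [CompleteSpace E] (L : E →L[ℝ] ℝ × ℝ) (hL : Function.Surjective L) :
    interior {x | distNearestInt (L x).1 ≤ distNearestInt (L x).2} ⊆
      {x | distNearestInt (L x).1 < distNearestInt (L x).2} := by
  intro x hx
  have himage := (L.isOpenMap hL).image_mem_nhds (mem_interior_iff_mem_nhds.mp hx)
  refine distNearestInt_lt_of_eventually_le (Filter.mem_of_superset himage ?_)
  rintro _ ⟨y, hy, rfl⟩
  exact hy

lemma inner_eq_of_fin_two (u x : EuclideanSpace ℝ (Fin 2)) :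
    inner ℝ u x = u 0 * x 0 + u 1 * x 1 := by
  simp [PiLp.inner_apply, Fin.sum_univ_two, mul_comm]

lemma surjective_inner_prod_inner {u v : EuclideanSpace ℝ (Fin 2)}
    (h : u 0 * v 1 - u 1 * v 0 ≠ 0) :
    Function.Surjective fun x => (inner ℝ u x, inner ℝ v x) := by
  rintro ⟨p, q⟩
  set d := u 0 * v 1 - u 1 * v 0
  refine ⟨!₂[(p * v 1 - q * u 1) / d, (q * u 0 - p * v 0) / d], ?_⟩
  simp only [inner_eq_of_fin_two, Prod.mk.injEq, Matrix.cons_val_zero,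
    Matrix.cons_val_one]
  constructor <;> field_simp <;> ring

lemma vec_smul (k : ℤ) (m : Fin 2 → ℤ) : vec (k • m) = (k : ℝ) • vec m := by
  ext i; simp [vec]

lemma vec_neg (m : Fin 2 → ℤ) : vec (-m) = -vec m := by
  ext i; simp [vec]

lemma vec_eq_zero_iff {m : Fin 2 → ℤ} : vec m = 0 ↔ m = 0 := by
  simp [vec, funext_iff]

lemma IsCoprime.exists_eq_smul_of_cross_eq_zero {m m' : Fin 2 → ℤ} (hm : IsCoprime (m 0) (m 1))
    (h : m 0 * m' 1 = m 1 * m' 0) : ∃ k : ℤ, m' = k • m := by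
  obtain ⟨a, b, hab⟩ := hm
  refine ⟨a * m' 0 + b * m' 1, funext (Fin.forall_fin_two.mpr ⟨?_, ?_⟩)⟩ <;>
    simp only [Pi.smul_apply, smul_eq_mul]
  · linear_combination (-m' 0) * hab - b * h
  · linear_combination (-m' 1) * hab + a * h

lemma cross_vec_ne_zero {m m' : Fin 2 → ℤ} (hm : IsCoprime (m 0) (m 1)) (hm' : m' ≠ 0)
    (hlt : ‖vec m'‖ < ‖vec m‖) : vec m 0 * vec m' 1 - vec m 1 * vec m' 0 ≠ 0 := by
  intro hcross
  obtain ⟨k, rfl⟩ : ∃ k : ℤ, m' = k • m := by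
    refine hm.exists_eq_smul_of_cross_eq_zero ?_
    simp only [vec, WithLp.equiv_symm_apply] at hcross
    exact_mod_cast sub_eq_zero.mp hcross
  have hk : k ≠ 0 := by rintro rfl; exact hm' (zero_smul ℤ m)
  have : ‖vec m‖ ≤ ‖vec (k • m)‖ := by
    rw [vec_smul, norm_smul, Real.norm_eq_abs, ← Int.cast_abs]
    exact le_mul_of_one_le_left (norm_nonneg _) (by exact_mod_cast Int.one_le_abs hk)
  linarith

/-- Let `m ∈ ℤ²` be a primitive point and let `𝔖` be the intersection over all
`m' ∈ ℤ² \ {0, ±m}` with `|m'| ≤ |m|` of the sets `{x ∈ ℝ² : ‖⟨m, x⟩‖ ≤ ‖⟨m', x⟩‖}`.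
Then the set of all `α ∈ ℝ²` such that `m` is a best approximation for `⟨α, ·⟩` is
contained in `𝔖` and contains the interior of `𝔖`. -/
theorem best_approximation_domain
    (m : Fin 2 → ℤ) (hm : IsCoprime (m 0) (m 1))
    (𝔖 : Set (EuclideanSpace ℝ (Fin 2)))
    (h𝔖 : 𝔖 = ⋂ m' ∈ {m' : Fin 2 → ℤ | m' ≠ 0 ∧ m' ≠ m ∧ m' ≠ -m ∧ ‖vec m'‖ ≤ ‖vec m‖},
      {x : EuclideanSpace ℝ (Fin 2) |
        distNearestInt (inner ℝ (vec m) x) ≤ distNearestInt (inner ℝ (vec m') x)}) :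
    {α : EuclideanSpace ℝ (Fin 2) | IsBestApprox α m} ⊆ 𝔖 ∧
    interior 𝔖 ⊆ {α : EuclideanSpace ℝ (Fin 2) | IsBestApprox α m} := by
  have hm0 : m ≠ 0 := by rintro rfl; exact not_isCoprime_zero_zero hm
  have h𝔖_subset : ∀ m', m' ≠ 0 → m' ≠ m → m' ≠ -m → ‖vec m'‖ ≤ ‖vec m‖ →
      𝔖 ⊆ {x | distNearestInt (inner ℝ (vec m) x) ≤ distNearestInt (inner ℝ (vec m') x)} :=
    fun m' h0 hm hneg hle => h𝔖 ▸ Set.biInter_subset_of_mem ⟨h0, hm, hneg, hle⟩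
  refine ⟨fun α ⟨_, hlt, heq⟩ => ?_,
    fun α hα => ⟨hm0, fun m' hm'0 hlt => ?_, fun m' hm'm hm'neg heq => ?_⟩⟩
  · rw [h𝔖]
    refine Set.mem_iInter₂.mpr fun m' ⟨hm'0, hm'm, hm'neg, hle⟩ => ?_
    rw [Set.mem_ofPred_eq, real_inner_comm α, real_inner_comm α]
    rcases hle.lt_or_eq with hle | hle
    exacts [(hlt m' hm'0 hle).le, heq m' hm'm hm'neg hle]
  · have hm'm : m' ≠ m := by rintro rfl; exact hlt.false
    have hm'neg : m' ≠ -m := by rintro rfl; rw [vec_neg, norm_neg] at hlt; exact hlt.false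
    have hstrict := interior_setOf_distNearestInt_le_subset
      ((innerSL ℝ (vec m)).prod (innerSL ℝ (vec m')))
      (surjective_inner_prod_inner (cross_vec_ne_zero hm hm'0 hlt))
      (interior_mono (h𝔖_subset m' hm'0 hm'm hm'neg hlt.le) hα)
    simpa [real_inner_comm (vec _)] using hstrict
  · have hm'0 : m' ≠ 0 := by
      rintro rfl
      rw [vec_eq_zero_iff.mpr rfl, norm_zero, eq_comm, norm_eq_zero, vec_eq_zero_iff] at heq
      exact hm0 heq
    simpa [real_inner_comm (vec _)] using h𝔖_subset m' hm'0 hm'm hm'neg heq.le (interior_subset hα)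
end
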